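/- arXiv:1908.10691 — 2 statements merged into one kernel-verified Lean document; each statement's English description precedes it below -/
import Mathlib

section
/- Let d ≥ 2, let P be a stationary and ergodic probability measure on (Ω,F), let r ∈ [1,∞), and let u : Ω × ℤ^d → ℝ be a measurable function with u ∈ Stat_P(ℝ), u(·,0) ∈ L^r(Ω,ℝ), and such that for P-almost every ω, (Δ u(ω,·))(x) = 0 for all x ∈ ℤ^d. Then for P-almost every ω and every x ∈ ℤ^d, u(ω,x) = E_P[u(·,0)]. -/
open MeasureTheory Filter
open scoped ENNReal Classical

noncomputable section

/-- Points of the lattice `ℤ^d`. -/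
abbrev Zd (d : ℕ) := Fin d → ℤ

/-- The `i`-th standard unit vector of `ℤ^d`. -/
def unitVec {d : ℕ} (i : Fin d) : Zd d := fun j => if j = i then 1 else 0

/-- Environments: a positive conductance for every (unoriented nearest-neighbour) edge,
where the edge `{x, x + e i}` is encoded by the pair `(x, i)`. -/
abbrev Env (d : ℕ) := ((Fin d → ℤ) × Fin d) → {r : ℝ // 0 < r}

/-- The conductance of the edge `{x, x + e i}` in the environment `ω`, as a real number. -/
def cval {d : ℕ} (ω : Env d) (x : Zd d) (i : Fin d) : ℝ := (ω (x, i)).1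

/-- Nearest-neighbour adjacency on `ℤ^d`. -/
def Adj {d : ℕ} (x y : Zd d) : Prop :=
  ∃ i : Fin d, y = x + unitVec i ∨ x = y + unitVec i

/-- The conductance `ω_{xy}` between two nearest neighbours `x ∼ y` (and `0` otherwise). -/
def econd {d : ℕ} (ω : Env d) (x y : Zd d) : ℝ :=
  ∑ i : Fin d, ((if y = x + unitVec i then cval ω x i else 0)
    + (if x = y + unitVec i then cval ω y i else 0))

/-- Discrete gradient `(∇_i u)(x) = u(x+e_i) - u(x)`. -/
def dGrad {d : ℕ} (i : Fin d) (f : Zd d → ℝ) (x : Zd d) : ℝ :=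
  f (x + unitVec i) - f x

/-- Discrete backward gradient `(∇_i^* u)(x) = u(x-e_i) - u(x)`. -/
def dGradStar {d : ℕ} (i : Fin d) (f : Zd d → ℝ) (x : Zd d) : ℝ :=
  f (x - unitVec i) - f x

/-- Discrete divergence `(∇^* ⬝ F)(x) = ∑ i, (F_i(x-e_i) - F_i(x))`. -/
def divStar {d : ℕ} (F : Zd d → Fin d → ℝ) (x : Zd d) : ℝ :=
  ∑ i : Fin d, (F (x - unitVec i) i - F x i)

/-- Discrete Laplacian `Δu = -∑ i, ∇_i^* ∇_i u`. -/
def lap {d : ℕ} (f : Zd d → ℝ) (x : Zd d) : ℝ :=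
  - ∑ i : Fin d, dGradStar i (dGrad i f) x

/-- The open discrete box `D_R = {x : |x|_∞ < R}`. -/
def boxD (d R : ℕ) : Finset (Zd d) :=
  Fintype.piFinset fun _ => Finset.Ioo (-(R : ℤ)) (R : ℤ)

/-- The closed discrete box `D̄_R = {x : |x|_∞ ≤ R}`. -/
def boxC (d R : ℕ) : Finset (Zd d) :=
  Fintype.piFinset fun _ => Finset.Icc (-(R : ℤ)) (R : ℤ)

/-- The discrete boundary `∂D_R = {x : |x|_∞ = R}`. -/
def bdry (d R : ℕ) : Finset (Zd d) := boxC d R \ boxD d R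

/-- The reduced boundary `∂̃D_R` of points of `∂D_R` having a neighbour in `D_R`. -/
def tbdry (d R : ℕ) : Finset (Zd d) :=
  (bdry d R).filter fun x => ∃ y ∈ boxD d R, Adj x y

/-- The oriented edge set `E_R = {(x,y) : x ∼ y, |x+y|_∞ < 2R}`. -/
def ER (d R : ℕ) : Finset (Zd d × Zd d) :=
  ((boxC d R) ×ˢ (boxC d R)).filter fun e =>
    Adj e.1 e.2 ∧ ∀ i, |e.1 i + e.2 i| < 2 * (R : ℤ)

/-- The normal edges `E_R^{nor} = {(x,y) : x ∈ D_R, y ∈ ∂D_R, x ∼ y}`. -/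
def Enor (d R : ℕ) : Finset (Zd d × Zd d) :=
  ((boxD d R) ×ˢ (bdry d R)).filter fun e => Adj e.1 e.2

/-- The tangential edges `E_R^{tan} = {(x,y) : x, y ∈ ∂D_R, x ∼ y}`. -/
def Etan (d R : ℕ) : Finset (Zd d × Zd d) :=
  ((bdry d R) ×ˢ (bdry d R)).filter fun e => Adj e.1 e.2

/-- Normalized `ℓ^r` norm `⦀u⦀_{r,A}` on a finite set. -/
def avNorm {V : Type*} (r : ℝ) (A : Finset V) (u : V → ℝ) : ℝ :=
  ((∑ x ∈ A, |u x| ^ r) / (A.card : ℝ)) ^ (1 / r)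

/-- Sup norm `⦀u⦀_{∞,A}` on a finite set. -/
def supNorm {V : Type*} (A : Finset V) (u : V → ℝ) : ℝ :=
  ⨆ x ∈ A, |u x|

/-- Normalized `ℓ^r` norm for an extended exponent `r ∈ [1,∞]`. -/
def avNormE {V : Type*} (r : ℝ≥0∞) (A : Finset V) (u : V → ℝ) : ℝ :=
  if r = ∞ then supNorm A u else avNorm r.toReal A u

/-- The exponent `2p/(p-1)`, with the convention that it equals `2` for `p = ∞`. -/
def dualExp (p : ℝ≥0∞) : ℝ :=
  if p = ∞ then 2 else 2 * p.toReal / (p.toReal - 1)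

/-- The exponent `2p/(p+1)`, with the convention that it equals `2` for `p = ∞`. -/
def coExp (p : ℝ≥0∞) : ℝ :=
  if p = ∞ then 2 else 2 * p.toReal / (p.toReal + 1)

/-- Euclidean norm on `ℝ^d`. -/
def vecNorm {d : ℕ} (v : Fin d → ℝ) : ℝ := Real.sqrt (∑ i, v i ^ 2)

/-- The translation `τ_a` acting on environments. -/
def shiftEnv {d : ℕ} (a : Zd d) (ω : Env d) : Env d := fun e => ω (e.1 + a, e.2)

/-- Stationarity of a measure on environments. -/
def Stationary {d : ℕ} (P : Measure (Env d)) : Prop :=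
  ∀ a : Zd d, MeasurePreserving (shiftEnv a) P P

/-- Ergodicity of a measure on environments w.r.t. the translations. -/
def ErgodicEnv {d : ℕ} (P : Measure (Env d)) : Prop :=
  ∀ A : Set (Env d), MeasurableSet A → (∀ a : Zd d, shiftEnv a ⁻¹' A = A) →
    P A = 0 ∨ P A = 1

/-- Stationary (`Stat_P`) random fields. -/
def StatP {d : ℕ} {E : Type*} [MeasurableSpace E] (P : Measure (Env d))
    (f : Env d → Zd d → E) : Prop :=
  Measurable (Function.uncurry f) ∧
    ∀ᵐ ω ∂P, ∀ x : Zd d, f ω x = f (shiftEnv x ω) 0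

/-- The horizontal derivative `D_i` on functions of the environment. -/
def Dop {d : ℕ} (i : Fin d) (ζ : Env d → ℝ) : Env d → ℝ :=
  fun ω => ζ (shiftEnv (unitVec i) ω) - ζ ω

/-- The horizontal derivative `D_i^*` on functions of the environment. -/
def DopStar {d : ℕ} (i : Fin d) (ζ : Env d → ℝ) : Env d → ℝ :=
  fun ω => ζ (shiftEnv (-(unitVec i)) ω) - ζ ω

/-- The reflection of `ℤ^d` flipping the `j`-th coordinate. -/
def reflPt {d : ℕ} (j : Fin d) (x : Zd d) : Zd d := fun k => if k = j then -x k else x k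

/-- The reflection `ρ_j` acting on environments. -/
def reflEnv {d : ℕ} (j : Fin d) (ω : Env d) : Env d :=
  fun e => ω (if e.2 = j then reflPt j e.1 - unitVec j else reflPt j e.1, e.2)

/-! Harmonicity of `u(ω, ·)` at the origin and stationarity say that `g = u(·, 0)` has the mean
value property `∑ᵢ (g ∘ τ_{eᵢ} + g ∘ τ_{-eᵢ} - 2 g) = 0` a.e. For the strictly convex function
`⟨t⟩ = √(1 + t²)`, of linear growth so that `⟨g⟩` is integrable, Jensen's inequality
`2d ⟨g⟩ ≤ ∑ᵢ (⟨g ∘ τ_{eᵢ}⟩ + ⟨g ∘ τ_{-eᵢ}⟩)` then holds pointwise, while stationarity gives both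
sides the same integral. So it is an equality a.e., which forces `g ∘ τ_{eᵢ} = g` a.e. Hence `g` is
a.e. invariant under all of `ℤ^d`, a.e. constant by ergodicity, and the constant is its mean. -/

def japaneseBracket (t : ℝ) : ℝ := Real.sqrt (1 + t ^ 2)

lemma japaneseBracket_pos (t : ℝ) : 0 < japaneseBracket t :=
  Real.sqrt_pos.2 (by positivity)

lemma sq_japaneseBracket (t : ℝ) : japaneseBracket t ^ 2 = 1 + t ^ 2 :=
  Real.sq_sqrt (by positivity)

lemma continuous_japaneseBracket : Continuous japaneseBracket := by
  unfold japaneseBracket; fun_prop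

lemma japaneseBracket_le_one_add_abs (t : ℝ) : japaneseBracket t ≤ 1 + |t| :=
  Real.sqrt_le_iff.2 ⟨by positivity, by nlinarith [abs_nonneg t, sq_abs t]⟩

lemma sq_japaneseBracket_mul (x y : ℝ) :
    (japaneseBracket x * japaneseBracket y) ^ 2 = (1 + x * y) ^ 2 + (x - y) ^ 2 := by
  rw [mul_pow, sq_japaneseBracket, sq_japaneseBracket]; ring

lemma one_add_mul_le_japaneseBracket_mul (x y : ℝ) :
    1 + x * y ≤ japaneseBracket x * japaneseBracket y := by
  nlinarith [sq_japaneseBracket_mul x y, sq_nonneg (x - y),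
    mul_pos (japaneseBracket_pos x) (japaneseBracket_pos y)]

lemma mul_sub_le_japaneseBracket_sub (x y : ℝ) :
    y / japaneseBracket y * (x - y) ≤ japaneseBracket x - japaneseBracket y := by
  have hy := japaneseBracket_pos y
  rw [div_mul_eq_mul_div, div_le_iff₀ hy, sub_mul, ← sq, sq_japaneseBracket]
  linarith [one_add_mul_le_japaneseBracket_mul x y]

lemma eq_of_mul_sub_eq_japaneseBracket_sub {x y : ℝ}
    (h : y / japaneseBracket y * (x - y) = japaneseBracket x - japaneseBracket y) : x = y := by
  have hy := japaneseBracket_pos y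
  rw [div_mul_eq_mul_div, div_eq_iff hy.ne', sub_mul, ← sq, sq_japaneseBracket] at h
  have hsq := sq_japaneseBracket_mul x y
  have : (x - y) ^ 2 = 0 := by
    rw [show japaneseBracket x * japaneseBracket y = 1 + x * y by linarith] at hsq; linarith
  exact sub_eq_zero.1 (pow_eq_zero_iff two_ne_zero |>.1 this)

section Jensen

variable {Ω ι : Type*} [MeasurableSpace Ω] {μ : Measure Ω}

lemma MeasureTheory.Integrable.japaneseBracket_comp [IsFiniteMeasure μ] {f : Ω → ℝ}
    (hf : Integrable f μ) :
    Integrable (fun ω => japaneseBracket (f ω)) μ := by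
  refine ((integrable_const 1).add hf.abs).mono'
    (continuous_japaneseBracket.comp_aestronglyMeasurable hf.1) (ae_of_all _ fun ω => ?_)
  rw [Real.norm_eq_abs, abs_of_pos (japaneseBracket_pos _)]
  exact japaneseBracket_le_one_add_abs _

/-- Equality case of Jensen's inequality for `⟨·⟩`. -/
theorem ae_eq_of_sum_sub_eq_zero_of_integral_japaneseBracket_eq [IsFiniteMeasure μ] [Fintype ι]
    {f : ι → Ω → ℝ} {g : Ω → ℝ} (hf : ∀ i, Integrable (f i) μ) (hg : Integrable g μ)
    (hmean : ∀ᵐ ω ∂μ, ∑ i, (f i ω - g ω) = 0)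
    (hint : ∀ i, ∫ ω, japaneseBracket (f i ω) ∂μ = ∫ ω, japaneseBracket (g ω) ∂μ) (i : ι) :
    f i =ᵐ[μ] g := by
  set gap : Ω → ℝ := fun ω => ∑ i, (japaneseBracket (f i ω) - japaneseBracket (g ω))
  set defect : ι → Ω → ℝ := fun i ω => japaneseBracket (f i ω) - japaneseBracket (g ω)
    - g ω / japaneseBracket (g ω) * (f i ω - g ω)
  have hdefect_nonneg : ∀ i ω, 0 ≤ defect i ω := fun i ω =>
    sub_nonneg.2 (mul_sub_le_japaneseBracket_sub _ _)
  have hgap_eq : ∀ᵐ ω ∂μ, ∑ i, defect i ω = gap ω := by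
    filter_upwards [hmean] with ω hω
    simp only [defect, gap, Finset.sum_sub_distrib, ← Finset.mul_sum, hω, mul_zero, sub_zero]
  have hterm_int : ∀ i, Integrable (fun ω => japaneseBracket (f i ω) - japaneseBracket (g ω)) μ :=
    fun i => (hf i).japaneseBracket_comp.sub hg.japaneseBracket_comp
  have hgap_int : Integrable gap μ := integrable_finsetSum _ fun i _ => hterm_int i
  have hgap_zero : gap =ᵐ[μ] 0 := by
    refine (integral_eq_zero_iff_of_nonneg_ae ?_ hgap_int).1 ?_
    · filter_upwards [hgap_eq] with ω hω
      exact hω ▸ Finset.sum_nonneg fun i _ => hdefect_nonneg i ω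
    · rw [integral_finsetSum _ fun i _ => hterm_int i]
      exact Finset.sum_eq_zero fun i _ => by
        rw [integral_sub (hf i).japaneseBracket_comp hg.japaneseBracket_comp, hint, sub_self]
  filter_upwards [hgap_eq, hgap_zero] with ω hω hω'
  have hsum : ∑ i, defect i ω = 0 := hω.trans hω'
  refine eq_of_mul_sub_eq_japaneseBracket_sub (sub_eq_zero.1 ?_).symm
  exact (Finset.sum_eq_zero_iff_of_nonneg fun i _ => hdefect_nonneg i ω).1 hsum i
    (Finset.mem_univ i)

end Jensen

lemma lap_eq_sum {d : ℕ} (f : Zd d → ℝ) (x : Zd d) :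
    lap f x = ∑ i, (f (x + unitVec i) + f (x - unitVec i) - 2 * f x) := by
  simp only [lap, dGradStar, dGrad, sub_add_cancel, ← Finset.sum_neg_distrib]
  exact Finset.sum_congr rfl fun i _ => by ring

section Environment

variable {d : ℕ}

lemma shiftEnv_shiftEnv (a b : Zd d) (ω : Env d) :
    shiftEnv a (shiftEnv b ω) = shiftEnv (a + b) ω := by
  funext e; simp [shiftEnv, add_assoc]

lemma shiftEnv_zero (ω : Env d) : shiftEnv 0 ω = ω := by
  funext e; simp [shiftEnv]

lemma measurable_shiftEnv (a : Zd d) : Measurable (shiftEnv a : Env d → Env d) :=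
  measurable_pi_lambda _ fun _ => measurable_pi_apply _

def shiftEnvEquiv (a : Zd d) : Env d ≃ᵐ Env d where
  toFun := shiftEnv a
  invFun := shiftEnv (-a)
  left_inv ω := by rw [shiftEnv_shiftEnv, neg_add_cancel, shiftEnv_zero]
  right_inv ω := by rw [shiftEnv_shiftEnv, add_neg_cancel, shiftEnv_zero]
  measurable_toFun := measurable_shiftEnv a
  measurable_invFun := measurable_shiftEnv (-a)

namespace Stationary

variable {P : Measure (Env d)} (hstat : Stationary P)
include hstat

lemma integrable_comp {g : Env d → ℝ} (hg : Integrable g P) (a : Zd d) :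
    Integrable (fun ω => g (shiftEnv a ω)) P :=
  (hstat a).integrable_comp_of_integrable hg

lemma integral_comp (g : Env d → ℝ) (a : Zd d) :
    ∫ ω, g (shiftEnv a ω) ∂P = ∫ ω, g ω ∂P :=
  (hstat a).integral_comp (shiftEnvEquiv a).measurableEmbedding g

/-- The periods of `g` up to `P`-null sets form a subgroup of `ℤ^d`, so invariance under the
unit vectors gives invariance under every shift. -/
lemma ae_comp_shiftEnv_eq_of_unitVec {α : Type*} {g : Env d → α}
    (hg : ∀ i, (fun ω => g (shiftEnv (unitVec i) ω)) =ᵐ[P] g) (a : Zd d) :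
    (fun ω => g (shiftEnv a ω)) =ᵐ[P] g := by
  let periods : AddSubgroup (Zd d) :=
    { carrier := {a | (fun ω => g (shiftEnv a ω)) =ᵐ[P] g}
      zero_mem' := by simp only [Set.mem_ofPred_eq, shiftEnv_zero]; rfl
      add_mem' := fun {a b} (ha : _ =ᵐ[P] g) (hb : _ =ᵐ[P] g) => by
        refine EventuallyEq.trans ?_ hb
        simpa only [Function.comp_def, shiftEnv_shiftEnv] using
          (hstat b).quasiMeasurePreserving.ae_eq_comp ha
      neg_mem' := fun {a} (ha : _ =ᵐ[P] g) => by
        show _ =ᵐ[P] g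
        refine EventuallyEq.symm ?_
        simpa only [Function.comp_def, shiftEnv_shiftEnv, add_neg_cancel, shiftEnv_zero] using
          (hstat (-a)).quasiMeasurePreserving.ae_eq_comp ha }
  have ha : a = ∑ i, a i • unitVec i := by
    funext j; simp [unitVec, Finset.sum_apply]
  rw [ha]
  exact periods.sum_mem fun i _ => periods.zsmul_mem (hg i) (a i)

lemma ae_comp_shiftEnv_unitVec_eq_of_mean_value [IsFiniteMeasure P] {g : Env d → ℝ}
    (hg : Integrable g P)
    (hmean : ∀ᵐ ω ∂P,
      ∑ i, (g (shiftEnv (unitVec i) ω) + g (shiftEnv (-unitVec i) ω) - 2 * g ω) = 0)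
    (i : Fin d) : (fun ω => g (shiftEnv (unitVec i) ω)) =ᵐ[P] g := by
  let nbr : Fin d ⊕ Fin d → Zd d := Sum.elim unitVec fun i => -unitVec i
  refine ae_eq_of_sum_sub_eq_zero_of_integral_japaneseBracket_eq
    (f := fun k ω => g (shiftEnv (nbr k) ω)) (fun k => hstat.integrable_comp hg _) hg ?_
    (fun k => hstat.integral_comp (fun ω => japaneseBracket (g ω)) _) (Sum.inl i)
  filter_upwards [hmean] with ω hω
  rw [Fintype.sum_sum_type, ← Finset.sum_add_distrib, ← hω]
  exact Finset.sum_congr rfl fun i _ => by simp only [nbr, Sum.elim_inl, Sum.elim_inr]; ring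

end Stationary

namespace ErgodicEnv

variable {P : Measure (Env d)} [IsProbabilityMeasure P] (herg : ErgodicEnv P)
include herg

/-- Ergodicity extends to a.e.-invariant sets: `{ω | ∀ a, τ_a ω ∈ A}` is strictly invariant and,
`ℤ^d` being countable, a.e. equal to `A`. -/
lemma ae_mem_or_ae_notMem {A : Set (Env d)} (hA : MeasurableSet A)
    (hinv : ∀ a, shiftEnv a ⁻¹' A =ᵐ[P] A) : (∀ᵐ ω ∂P, ω ∈ A) ∨ ∀ᵐ ω ∂P, ω ∉ A := by
  set B : Set (Env d) := ⋂ a, shiftEnv a ⁻¹' A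
  have hB : MeasurableSet B := MeasurableSet.iInter fun a => measurable_shiftEnv a hA
  have hB_inv : ∀ b, shiftEnv b ⁻¹' B = B := by
    intro b
    ext ω
    simp only [B, Set.mem_preimage, Set.mem_iInter, shiftEnv_shiftEnv]
    exact (Equiv.addRight b).forall_congr_right (q := fun a => shiftEnv a ω ∈ A)
  have hBA : B =ᵐ[P] A := by
    refine eventuallyEq_set.2 ?_
    filter_upwards [ae_all_iff.2 fun a => (hinv a).mem_iff] with ω hω
    simp only [B, Set.mem_iInter, Set.mem_preimage]
    exact ⟨fun h => (hω 0).1 (h 0), fun h a => (hω a).2 h⟩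
  rcases herg B hB hB_inv with h | h
  · exact .inr (measure_eq_zero_iff_ae_notMem.1 (measure_congr hBA ▸ h))
  · refine .inl ((ae_mem_iff_measure_eq hA.nullMeasurableSet).2 ?_)
    rw [← measure_congr hBA, h, measure_univ]

lemma exists_ae_eq_const {X : Type*} [MeasurableSpace X] [MeasurableSpace.CountablySeparated X]
    [Nonempty X] {g : Env d → X} (hg : Measurable g)
    (hinv : ∀ a, (fun ω => g (shiftEnv a ω)) =ᵐ[P] g) : ∃ c, g =ᵐ[P] fun _ => c :=
  exists_eventuallyEq_const_of_forall_separating MeasurableSet fun U hU =>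
    herg.ae_mem_or_ae_notMem (hg hU) fun a => (hinv a).fun_comp (· ∈ U)

end ErgodicEnv

end Environment

theorem stationary_harmonic_constant_general
    (d : ℕ)
    (P : Measure (Env d)) [IsProbabilityMeasure P]
    (hstat : Stationary P) (herg : ErgodicEnv P)
    (r : ℝ) (hr : 1 ≤ r)
    (u : Env d → Zd d → ℝ) (hu : StatP P u)
    (hint : MemLp (fun ω => u ω 0) (ENNReal.ofReal r) P)
    (hharm : ∀ᵐ ω ∂P, ∀ x : Zd d, lap (u ω) x = 0) :
    ∀ᵐ ω ∂P, ∀ x : Zd d, u ω x = ∫ ω', u ω' 0 ∂P := by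
  have hmeas : Measurable fun ω => u ω 0 := hu.1.comp (measurable_id.prodMk measurable_const)
  have hmean : ∀ᵐ ω ∂P, ∑ i, (u (shiftEnv (unitVec i) ω) 0 + u (shiftEnv (-unitVec i) ω) 0
      - 2 * u ω 0) = 0 := by
    filter_upwards [hharm, hu.2] with ω hω hshift
    simpa only [lap_eq_sum, zero_add, zero_sub, ← hshift] using hω 0
  have hinv : ∀ a, (fun ω => u (shiftEnv a ω) 0) =ᵐ[P] fun ω => u ω 0 :=
    hstat.ae_comp_shiftEnv_eq_of_unitVec <| hstat.ae_comp_shiftEnv_unitVec_eq_of_mean_value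
      (hint.integrable (ENNReal.one_le_ofReal.2 hr)) hmean
  obtain ⟨c, hc⟩ := herg.exists_ae_eq_const hmeas hinv
  have hmean_c : ∫ ω, u ω 0 ∂P = c := by simp [integral_congr_ae hc]
  filter_upwards [ae_all_iff.2 fun x => (hinv x).trans hc, hu.2] with ω hω hshift x
  rw [hshift x, hmean_c]
  exact hω x

/-- Lemma `d20`: a stationary `L^r`-integrable field that is P-a.s.
harmonic for the discrete Laplacian is P-a.s. constant, equal to `E_P[u(·,0)]`. -/
theorem stationary_harmonic_constant
    (d : ℕ) (hd : 2 ≤ d)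
    (P : Measure (Env d)) [IsProbabilityMeasure P]
    (hstat : Stationary P) (herg : ErgodicEnv P)
    (r : ℝ) (hr : 1 ≤ r)
    (u : Env d → Zd d → ℝ) (hu : StatP P u)
    (hint : MemLp (fun ω => u ω 0) (ENNReal.ofReal r) P)
    (hharm : ∀ᵐ ω ∂P, ∀ x : Zd d, lap (u ω) x = 0) :
    ∀ᵐ ω ∂P, ∀ x : Zd d, u ω x = ∫ ω', u ω' 0 ∂P :=
  stationary_harmonic_constant_general d P hstat herg r hr u hu hint hharm

end
end

section
/- Let d ≥ 2, R ∈ ℕ with ∂̃D_R nonempty, c ∈ [1,∞), p ∈ (1,∞] (convention 1/∞ = 0, so 2p/(p−1) = 2 and 2p/(p+1) = 2 when p = ∞), and assume |∂D_R| ≤ c |∂̃D_R|. Let S, Z : ℝ^{∂D_R} → ℝ^{∂D_R} be linear operators such that Zu = 0 whenever u vanishes on ∂̃D_R, and such that for all u : ∂D_R → ℝ: ⦀Su⦀_{2p/(p−1), ∂D_R} ≤ c ⦀u⦀_{2p/(p−1), ∂D_R} and ⦀Zu⦀_{2p/(p−1), ∂D_R} ≤ c ⦀u⦀_{2p/(p−1),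 ∂̃D_R}. Define S^* : ℝ^{∂̃D_R} → ℝ^{∂̃D_R} by (S^*h)(x) = Σ_{y∈∂̃D_R} h(y) (S Z 1_{{x}})(y). Then for all h : ∂̃D_R → ℝ: ⦀S^*h⦀_{2p/(p+1), ∂̃D_R} ≤ c³ ⦀h⦀_{2p/(p+1), ∂̃D_R}. -/
open MeasureTheory Filter
open scoped ENNReal Classical

noncomputable section

/-- The dual smoothing operator `S^*` built from `S` and the modifying operator `Z`. -/
def Sstar (d R : ℕ) (S Z : (Zd d → ℝ) →ₗ[ℝ] (Zd d → ℝ)) (h : Zd d → ℝ) (x : Zd d) : ℝ :=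
  ∑ y ∈ tbdry d R, h y * (S (Z (fun z => if z = x then (1 : ℝ) else 0))) y

/-! By duality between the averaged norms with the conjugate exponents `r = 2p/(p+1)` and
`q = 2p/(p-1)`, it suffices to bound the averaged pairing of `S^* h` with test functions `g`
supported on `∂̃D_R`. That pairing is the pairing of `h` with `S Z g`, so Hölder's inequality and
the bounds on `S` and `Z` give `c² ⦀g⦀_q`, up to the factor `(|∂D_R|/|∂̃D_R|)^{1/q} ≤ c` paid
for passing from the average over `∂̃D_R` to the average over `∂D_R`. -/

lemma mul_sign_mul_abs_rpow_sub_one {r : ℝ} (hr : r ≠ 0) (x : ℝ) :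
    x * (SignType.sign x * |x| ^ (r - 1)) = |x| ^ r := by
  rw [← mul_assoc, self_mul_sign, ← Real.rpow_one_add' (abs_nonneg x) (by simpa using hr)]
  ring_nf

lemma abs_sign_mul_abs_rpow_sub_one_rpow {r q : ℝ} (hrq : r.HolderConjugate q) (x : ℝ) :
    |SignType.sign x * |x| ^ (r - 1)| ^ q = |x| ^ r := by
  rcases eq_or_ne x 0 with rfl | hx
  · simp [hrq.ne_zero, hrq.symm.ne_zero]
  have hsign : |(SignType.sign x : ℝ)| = 1 := by
    rcases lt_or_gt_of_ne hx with hneg | hpos <;> simp [*]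
  rw [abs_mul, hsign, one_mul, abs_of_nonneg (Real.rpow_nonneg (abs_nonneg x) _),
    ← Real.rpow_mul (abs_nonneg x), hrq.sub_one_mul_conj]

section AvNorm

variable {V : Type*} (A : Finset V)

lemma avNorm_nonneg (r : ℝ) (u : V → ℝ) : 0 ≤ avNorm r A u := by
  unfold avNorm; positivity

lemma avNorm_empty {r : ℝ} (hr : r ≠ 0) (u : V → ℝ) : avNorm r (∅ : Finset V) u = 0 := by
  simp [avNorm, hr]

lemma avNorm_eq_div (r : ℝ) (u : V → ℝ) :
    avNorm r A u = (∑ x ∈ A, |u x| ^ r) ^ (1 / r) / (A.card : ℝ) ^ (1 / r) :=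
  Real.div_rpow (Finset.sum_nonneg fun _ _ => by positivity) (Nat.cast_nonneg _) _

lemma sum_mul_div_card_le_avNorm_mul_avNorm {r q : ℝ} (hrq : r.HolderConjugate q)
    (f g : V → ℝ) :
    (∑ x ∈ A, f x * g x) / A.card ≤ avNorm r A f * avNorm q A g := by
  rcases A.eq_empty_or_nonempty with rfl | hA
  · simpa using mul_nonneg (avNorm_nonneg ∅ r f) (avNorm_nonneg ∅ q g)
  have hn : (0 : ℝ) < A.card := by exact_mod_cast hA.card_pos
  have hsplit : (A.card : ℝ) = (A.card : ℝ) ^ (1 / r) * (A.card : ℝ) ^ (1 / q) := by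
    rw [← Real.rpow_add hn, hrq.one_div_add_one_div, div_one, Real.rpow_one]
  rw [avNorm_eq_div, avNorm_eq_div, div_mul_div_comm, ← hsplit]
  exact div_le_div_of_nonneg_right (Real.inner_le_Lp_mul_Lq A f g hrq) hn.le

lemma avNorm_le_rpow_mul_avNorm_of_subset {B : Finset V} {q c : ℝ} (hq : 0 < q) (hc : 0 ≤ c)
    (hAB : A ⊆ B) (hcard : (B.card : ℝ) ≤ c * A.card) (u : V → ℝ) :
    avNorm q A u ≤ c ^ (1 / q) * avNorm q B u := by
  rcases A.eq_empty_or_nonempty with rfl | hA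
  · rw [avNorm_empty hq.ne']
    exact mul_nonneg (Real.rpow_nonneg hc _) (avNorm_nonneg B q u)
  have hnA : (0 : ℝ) < A.card := by exact_mod_cast hA.card_pos
  have hnB : (0 : ℝ) < B.card := by exact_mod_cast (hA.mono hAB).card_pos
  have hsum : ∑ x ∈ A, |u x| ^ q ≤ ∑ x ∈ B, |u x| ^ q :=
    Finset.sum_le_sum_of_subset_of_nonneg hAB fun _ _ _ => by positivity
  unfold avNorm
  rw [← Real.mul_rpow hc (by positivity)]
  gcongr
  calc (∑ x ∈ A, |u x| ^ q) / A.card ≤ (∑ x ∈ B, |u x| ^ q) / A.card := by gcongr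
    _ = (∑ x ∈ B, |u x| ^ q) * B.card / (B.card * A.card) := by field_simp
    _ ≤ (∑ x ∈ B, |u x| ^ q) * (c * A.card) / (B.card * A.card) := by gcongr
    _ = c * ((∑ x ∈ B, |u x| ^ q) / B.card) := by field_simp

lemma avNorm_le_of_forall_sum_mul_le {r q K : ℝ} (hrq : r.HolderConjugate q) (hK : 0 ≤ K)
    (F : V → ℝ)
    (hF : ∀ g : V → ℝ, (∀ x ∉ A, g x = 0) → (∑ x ∈ A, F x * g x) / A.card ≤ K * avNorm q A g) :
    avNorm r A F ≤ K := by
  set M := (∑ x ∈ A, |F x| ^ r) / A.card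
  have hM0 : 0 ≤ M := by positivity
  set g : V → ℝ := fun x => if x ∈ A then SignType.sign (F x) * |F x| ^ (r - 1) else 0
  have hFg : ∑ x ∈ A, F x * g x = ∑ x ∈ A, |F x| ^ r := Finset.sum_congr rfl fun x hx => by
    simp only [g, if_pos hx, mul_sign_mul_abs_rpow_sub_one hrq.ne_zero]
  have hg : ∑ x ∈ A, |g x| ^ q = ∑ x ∈ A, |F x| ^ r := Finset.sum_congr rfl fun x hx => by
    simp only [g, if_pos hx, abs_sign_mul_abs_rpow_sub_one_rpow hrq]
  have hM : M ≤ K * M ^ (1 / q) := by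
    simpa only [avNorm, hFg, hg] using hF g fun x hx => if_neg hx
  change M ^ (1 / r) ≤ K
  rcases hM0.eq_or_lt with hM0 | hMpos
  · rw [← hM0, Real.zero_rpow hrq.one_div_ne_zero]
    exact hK
  · refine le_of_mul_le_mul_right ?_ (Real.rpow_pos_of_pos hMpos (1 / q))
    rwa [← Real.rpow_add hMpos, hrq.one_div_add_one_div, div_one, Real.rpow_one]

end AvNorm

lemma sum_transpose_mul_eq_sum_mul_apply {V : Type*} [DecidableEq V] (A : Finset V)
    (T : (V → ℝ) →ₗ[ℝ] (V → ℝ)) (h g : V → ℝ) (hg : ∀ x ∉ A, g x = 0) :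
    ∑ x ∈ A, (∑ y ∈ A, h y * T (fun z => if z = x then 1 else 0) y) * g x
      = ∑ y ∈ A, h y * T g y := by
  have hg_eq : g = ∑ x ∈ A, g x • fun z => if z = x then (1 : ℝ) else 0 := by
    funext z
    by_cases hz : z ∈ A <;> simp [Finset.sum_apply, hz, hg]
  calc ∑ x ∈ A, (∑ y ∈ A, h y * T (fun z => if z = x then 1 else 0) y) * g x
      = ∑ y ∈ A, h y * ∑ x ∈ A, g x * T (fun z => if z = x then 1 else 0) y := by
        simp only [Finset.sum_mul, Finset.mul_sum]
        rw [Finset.sum_comm]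
        exact Finset.sum_congr rfl fun _ _ => Finset.sum_congr rfl fun _ _ => by ring
    _ = ∑ y ∈ A, h y * T g y := by
        conv_rhs => rw [hg_eq]
        simp [map_sum, Finset.sum_apply]

lemma holderConjugate_coExp_dualExp {p : ℝ≥0∞} (hp : 1 < p) :
    (coExp p).HolderConjugate (dualExp p) := by
  by_cases hptop : p = ∞
  · simpa [coExp, dualExp, hptop] using Real.HolderConjugate.two_two
  have ht : 1 < p.toReal := by simpa using ENNReal.toReal_strict_mono hptop hp
  simp only [coExp, dualExp, if_neg hptop]
  rw [Real.holderConjugate_iff, lt_div_iff₀ (by linarith), inv_div, inv_div, ← add_div,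
    div_eq_one_iff_eq (by linarith)]
  constructor <;> linarith

theorem dual_smoothing_bound_general
    (d : ℕ) (R : ℕ)
    (c : ℝ) (hc : 1 ≤ c) (p : ℝ≥0∞) (hp : 1 < p)
    (hcard : ((bdry d R).card : ℝ) ≤ c * ((tbdry d R).card : ℝ))
    (S Z : (Zd d → ℝ) →ₗ[ℝ] (Zd d → ℝ))
    (hS : ∀ u : Zd d → ℝ,
      avNorm (dualExp p) (bdry d R) (S u) ≤ c * avNorm (dualExp p) (bdry d R) u)
    (hZ : ∀ u : Zd d → ℝ,
      avNorm (dualExp p) (bdry d R) (Z u) ≤ c * avNorm (dualExp p) (tbdry d R) u) :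
    ∀ h : Zd d → ℝ,
      avNorm (coExp p) (tbdry d R) (Sstar d R S Z h)
        ≤ c ^ 3 * avNorm (coExp p) (tbdry d R) h := by
  intro h
  have hrq := holderConjugate_coExp_dualExp hp
  have hc0 : 0 ≤ c := by linarith
  set q := dualExp p
  set A := tbdry d R
  set B := bdry d R
  have hrestrict : ∀ u, avNorm q A u ≤ c * avNorm q B u := fun u =>
    (avNorm_le_rpow_mul_avNorm_of_subset A hrq.symm.pos hc0 (Finset.filter_subset _ _) hcard u).trans
      (mul_le_mul_of_nonneg_right (Real.rpow_le_self_of_one_le hc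
        ((div_le_one hrq.symm.pos).mpr hrq.symm.lt.le)) (avNorm_nonneg _ _ _))
  refine avNorm_le_of_forall_sum_mul_le A hrq (mul_nonneg (pow_nonneg hc0 3) (avNorm_nonneg _ _ _))
    _ fun g hg => ?_
  have hSZ : avNorm q A (S (Z g)) ≤ c ^ 3 * avNorm q A g :=
    calc avNorm q A (S (Z g)) ≤ c * avNorm q B (S (Z g)) := hrestrict _
      _ ≤ c * (c * avNorm q B (Z g)) := mul_le_mul_of_nonneg_left (hS _) hc0
      _ ≤ c * (c * (c * avNorm q A g)) := by gcongr; exact hZ g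
      _ = c ^ 3 * avNorm q A g := by ring
  have htranspose : ∑ x ∈ A, Sstar d R S Z h x * g x = ∑ y ∈ A, h y * S (Z g) y :=
    sum_transpose_mul_eq_sum_mul_apply A (S ∘ₗ Z) h g hg
  rw [htranspose]
  calc _ ≤ avNorm (coExp p) A h * avNorm q A (S (Z g)) :=
        sum_mul_div_card_le_avNorm_mul_avNorm A hrq _ _
    _ ≤ avNorm (coExp p) A h * (c ^ 3 * avNorm q A g) :=
        mul_le_mul_of_nonneg_left hSZ (avNorm_nonneg _ _ _)
    _ = c ^ 3 * avNorm (coExp p) A h * avNorm q A g := by ring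

/-- Lemma `y27`: under `L^{2p/(p-1)}` bounds on `S` and `Z`,
`⦀S^* h⦀_{2p/(p+1), ∂̃D_R} ≤ c³ ⦀h⦀_{2p/(p+1), ∂̃D_R}`. -/
theorem dual_smoothing_bound
    (d : ℕ) (hd : 2 ≤ d) (R : ℕ) (hne : (tbdry d R).Nonempty)
    (c : ℝ) (hc : 1 ≤ c) (p : ℝ≥0∞) (hp : 1 < p)
    (hcard : ((bdry d R).card : ℝ) ≤ c * ((tbdry d R).card : ℝ))
    (S Z : (Zd d → ℝ) →ₗ[ℝ] (Zd d → ℝ))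
    (hZ0 : ∀ u : Zd d → ℝ, (∀ x ∈ tbdry d R, u x = 0) → Z u = 0)
    (hS : ∀ u : Zd d → ℝ,
      avNorm (dualExp p) (bdry d R) (S u) ≤ c * avNorm (dualExp p) (bdry d R) u)
    (hZ : ∀ u : Zd d → ℝ,
      avNorm (dualExp p) (bdry d R) (Z u) ≤ c * avNorm (dualExp p) (tbdry d R) u) :
    ∀ h : Zd d → ℝ,
      avNorm (coExp p) (tbdry d R) (Sstar d R S Z h)
        ≤ c ^ 3 * avNorm (coExp p) (tbdry d R) h :=
  dual_smoothing_bound_general d R c hc p hp hcard S Z hS hZ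

end
end
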